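/- arXiv:1002.3496 — 3 statements merged into one kernel-verified Lean document; each statement's English description precedes it below -/
import Mathlib

section
/- For all λ ≥ 0 and all u ∈ ℝ and n ≥ 1, log 𝔼(e^{λX₁}) ≥ λu + (1/n) log ℙ(X̄ₙ ≥ u), where X̄ₙ = (X₁+⋯+Xₙ)/n. -/
open MeasureTheory ProbabilityTheory Filter Topology

/-- Empirical mean of the first `n` variables. -/
noncomputable def empMean {Ω : Type*} (X : ℕ → Ω → ℝ) (n : ℕ) (ω : Ω) : ℝ :=
  (∑ i ∈ Finset.range n, X i ω) / n

/-- The entropy `s(x) = sup_{n ≥ 1} (1/n) log ℙ(X̄ₙ ≥ x)`, with values in `[-∞, 0]`. -/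
noncomputable def entropy {Ω : Type*} [MeasurableSpace Ω] (μ : Measure Ω)
    (X : ℕ → Ω → ℝ) (x : ℝ) : EReal :=
  ⨆ n : ℕ, ⨆ _ : 1 ≤ n, (((n : ℝ)⁻¹ : ℝ) : EReal) *
    ENNReal.log (μ {ω | x ≤ empMean X n ω})

/-- The pressure `p(λ) = log 𝔼(e^{λ X₁})`, with values in `(-∞, ∞]`. -/
noncomputable def pressure {Ω : Type*} [MeasurableSpace Ω] (μ : Measure Ω)
    (X : ℕ → Ω → ℝ) (l : ℝ) : EReal :=
  ENNReal.log (∫⁻ ω, ENNReal.ofReal (Real.exp (l * X 0 ω)) ∂μ)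

/-!
Chernoff's argument: with `Sₙ = X₁ + ⋯ + Xₙ`, Markov's inequality for `e^{λ Sₙ}` gives
`e^{nλu} ℙ(X̄ₙ ≥ u) ≤ 𝔼 e^{λ Sₙ}`, and independence with identical distribution factors the right
side as `(𝔼 e^{λ X₁})ⁿ`. Taking `n`-th roots in `[0, ∞]` before the logarithm avoids any case
split on `ℙ(X̄ₙ ≥ u) = 0` or `𝔼 e^{λ X₁} = ∞`.
-/

open scoped ENNReal

theorem ENNReal.log_add_inv_mul_log_le_log_of_pow_mul_le {a p M : ℝ≥0∞} {n : ℕ} (hn : n ≠ 0)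
    (h : a ^ n * p ≤ M ^ n) :
    ENNReal.log a + (((n : ℝ)⁻¹ : ℝ) : EReal) * ENNReal.log p ≤ ENNReal.log M := by
  rw [← ENNReal.log_rpow, ← ENNReal.log_mul_add]
  refine ENNReal.log_le_log ((ENNReal.pow_le_pow_left_iff hn).1 ?_)
  rwa [mul_pow, ENNReal.rpow_inv_natCast_pow hn]

theorem ofReal_exp_mul_mul_measure_le_lintegral {Ω : Type*} [MeasurableSpace Ω] {μ : Measure Ω}
    {S : Ω → ℝ} (hS : AEMeasurable S μ) {l : ℝ} (hl : 0 ≤ l) (t : ℝ) :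
    ENNReal.ofReal (Real.exp (l * t)) * μ {ω | t ≤ S ω} ≤
      ∫⁻ ω, ENNReal.ofReal (Real.exp (l * S ω)) ∂μ := by
  refine le_trans ?_
    (mul_meas_ge_le_lintegral₀ (by fun_prop) (ENNReal.ofReal (Real.exp (l * t))))
  refine mul_le_mul_right (measure_mono fun ω (hω : t ≤ S ω) => ?_) _
  change ENNReal.ofReal (Real.exp (l * t)) ≤ ENNReal.ofReal (Real.exp (l * S ω))
  gcongr

theorem lintegral_ofReal_exp_mul_sum_eq_pow {Ω ι : Type*} [MeasurableSpace Ω] {μ : Measure Ω}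
    {X : ι → Ω → ℝ} {i₀ : ι} (hmeas : ∀ i, Measurable (X i)) (hindep : iIndepFun X μ)
    (hident : ∀ i, IdentDistrib (X i) (X i₀) μ μ) (l : ℝ) (s : Finset ι) :
    ∫⁻ ω, ENNReal.ofReal (Real.exp (l * ∑ i ∈ s, X i ω)) ∂μ =
      (∫⁻ ω, ENNReal.ofReal (Real.exp (l * X i₀ ω)) ∂μ) ^ s.card := by
  have hg : Measurable fun x : ℝ => ENNReal.ofReal (Real.exp (l * x)) := by fun_prop
  have hfactor (ω : Ω) : ENNReal.ofReal (Real.exp (l * ∑ i ∈ s, X i ω)) =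
      ∏ i ∈ s, ENNReal.ofReal (Real.exp (l * X i ω)) := by
    rw [Finset.mul_sum, Real.exp_sum, ENNReal.ofReal_prod_of_nonneg fun i _ => (Real.exp_pos _).le]
  simp_rw [hfactor]
  rw [lintegral_prod_eq_prod_lintegral_of_indepFun s
    (fun i ω => ENNReal.ofReal (Real.exp (l * X i ω))) (hindep.comp _ fun _ => hg)
    fun i => hg.comp (hmeas i)]
  exact Finset.prod_eq_pow_card fun i _ => ((hident i).comp hg).lintegral_eq

theorem le_empMean_iff {Ω : Type*} {X : ℕ → Ω → ℝ} {n : ℕ} (hn : 0 < n) (u : ℝ) (ω : Ω) :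
    u ≤ empMean X n ω ↔ n * u ≤ ∑ i ∈ Finset.range n, X i ω := by
  rw [empMean, le_div_iff₀ (by positivity), mul_comm]

theorem chebychev_lower_bound_general {Ω : Type*} [MeasurableSpace Ω] (μ : Measure Ω)
    (X : ℕ → Ω → ℝ) (hmeas : ∀ i, Measurable (X i))
    (hindep : iIndepFun X μ)
    (hident : ∀ i, IdentDistrib (X i) (X 0) μ μ)
    (l : ℝ) (hl : 0 ≤ l) (u : ℝ) (n : ℕ) (hn : 1 ≤ n) :
    ((l * u : ℝ) : EReal) + (((n : ℝ)⁻¹ : ℝ) : EReal) *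
        ENNReal.log (μ {ω | u ≤ empMean X n ω}) ≤ pressure μ X l := by
  have hchernoff : ENNReal.ofReal (Real.exp (l * u)) ^ n * μ {ω | u ≤ empMean X n ω} ≤
      (∫⁻ ω, ENNReal.ofReal (Real.exp (l * X 0 ω)) ∂μ) ^ n :=
    calc ENNReal.ofReal (Real.exp (l * u)) ^ n * μ {ω | u ≤ empMean X n ω}
        = ENNReal.ofReal (Real.exp (l * (n * u))) *
            μ {ω | n * u ≤ ∑ i ∈ Finset.range n, X i ω} := by
          simp_rw [le_empMean_iff hn, ← ENNReal.ofReal_pow (Real.exp_pos _).le,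
            ← Real.exp_nat_mul, mul_left_comm]
      _ ≤ ∫⁻ ω, ENNReal.ofReal (Real.exp (l * ∑ i ∈ Finset.range n, X i ω)) ∂μ :=
          ofReal_exp_mul_mul_measure_le_lintegral
            (Finset.measurable_sum _ fun i _ => hmeas i).aemeasurable hl _
      _ = _ := by
          rw [lintegral_ofReal_exp_mul_sum_eq_pow hmeas hindep hident, Finset.card_range]
  have hlog := ENNReal.log_add_inv_mul_log_le_log_of_pow_mul_le (by omega) hchernoff
  rwa [ENNReal.log_ofReal_of_pos (Real.exp_pos _), Real.log_exp] at hlog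

theorem chebychev_lower_bound {Ω : Type*} [MeasurableSpace Ω] (μ : Measure Ω) [IsProbabilityMeasure μ]
    (X : ℕ → Ω → ℝ) (hmeas : ∀ i, Measurable (X i))
    (hindep : iIndepFun X μ)
    (hident : ∀ i, IdentDistrib (X i) (X 0) μ μ)
    (l : ℝ) (hl : 0 ≤ l) (u : ℝ) (n : ℕ) (hn : 1 ≤ n) :
    ((l * u : ℝ) : EReal) + (((n : ℝ)⁻¹ : ℝ) : EReal) *
        ENNReal.log (μ {ω | u ≤ empMean X n ω}) ≤ pressure μ X l :=
  chebychev_lower_bound_general μ X hmeas hindep hident l hl u n hn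
end

section
/- For all x ≤ y, α ∈ (0,1), m ≥ 1, n ≥ m with Euclidean division n = mq + r (0 ≤ r < m), one has ℙ(X̄ₙ ≥ αx + (1-α)y) ≥ ℙ(X̄ₘ ≥ x)^{⌊αq⌋} · ℙ(X̄ₘ ≥ y)^{q - ⌊αq⌋} · ℙ(X₁ ≥ y)^r. -/
open MeasureTheory ProbabilityTheory Filter Topology

/-!
Split the first `n = m q + r` variables into consecutive blocks: `k = ⌊α q⌋` blocks of length `m`
whose sums are asked to reach `m x`, `q - k` blocks of length `m` asked to reach `m y`, and `r`
single variables asked to reach `y`. The blocks are independent and each block sum has the law of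
the sum of the first variables of the same count, so the probability that every block meets its
target is the product on the left. On that event the total sum is at least
`k m x + (q - k) m y + r y ≥ n (α x + (1 - α) y)`, because `k m ≤ α n` and `x ≤ y`.
-/

open Finset

namespace ProbabilityTheory

variable {Ω : Type*} [MeasurableSpace Ω] {μ : Measure Ω} {X : ℕ → Ω → ℝ}

lemma iIndepFun.indepFun_sum_range_sum_range_add (hindep : iIndepFun X μ)
    (hX : ∀ i, AEMeasurable (X i) μ) (a b : ℕ) :
    IndepFun (fun ω ↦ ∑ i ∈ range a, X i ω) (fun ω ↦ ∑ i ∈ range b, X (a + i) ω) μ := by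
  have hsum (s : Finset ℕ) : Measurable fun v : s → ℝ ↦ ∑ i, v i := by fun_prop
  have := (hindep.indepFun_finset₀ (range a) (Ico a (a + b))
    (by rw [range_eq_Ico]; exact Ico_disjoint_Ico_consecutive 0 a (a + b)) hX).comp (hsum _) (hsum _)
  convert this using 1 <;> ext ω
  · exact (sum_coe_sort _ fun i ↦ X i ω).symm
  · rw [Function.comp_apply, sum_coe_sort _ fun i ↦ X i ω, sum_Ico_eq_sum_range,
      Nat.add_sub_cancel_left]

lemma identDistrib_sum_range_add (hindep : iIndepFun X μ)
    (hident : ∀ i, IdentDistrib (X i) (X 0) μ μ) (a b : ℕ) :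
    IdentDistrib (fun ω ↦ ∑ i ∈ range b, X (a + i) ω) (fun ω ↦ ∑ i ∈ range b, X i ω) μ μ :=
  (IdentDistrib.pi (fun i ↦ (hident (a + i)).trans (hident i).symm)
    (hindep.precomp (add_right_injective a)) hindep).comp
    (u := fun v : ℕ → ℝ ↦ ∑ i ∈ range b, v i) (by fun_prop)

variable (μ X) in
noncomputable def partialSumTail (n : ℕ) (t : ℝ) : ENNReal :=
  μ {ω | t ≤ ∑ i ∈ range n, X i ω}

lemma partialSumTail_mul_le_add (hindep : iIndepFun X μ)
    (hident : ∀ i, IdentDistrib (X i) (X 0) μ μ) (a b : ℕ) (c d : ℝ) :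
    partialSumTail μ X a c * partialSumTail μ X b d ≤ partialSumTail μ X (a + b) (c + d) := by
  have hshift := identDistrib_sum_range_add hindep hident a b
  have hindep' := hindep.indepFun_sum_range_sum_range_add (fun i ↦ (hident i).aemeasurable_fst) a b
  calc partialSumTail μ X a c * partialSumTail μ X b d
      = μ ((fun ω ↦ ∑ i ∈ range a, X i ω) ⁻¹' Set.Ici c ∩
          (fun ω ↦ ∑ i ∈ range b, X (a + i) ω) ⁻¹' Set.Ici d) := by
        rw [hindep'.measure_inter_preimage_eq_mul _ _ measurableSet_Ici measurableSet_Ici,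
          hshift.measure_mem_eq measurableSet_Ici]
        rfl
    _ ≤ partialSumTail μ X (a + b) (c + d) := by
        refine measure_mono fun ω ⟨hc, hd⟩ ↦ ?_
        show c + d ≤ ∑ i ∈ range (a + b), X i ω
        rw [sum_range_add]
        exact add_le_add hc hd

lemma partialSumTail_pow_le [IsProbabilityMeasure μ] (hindep : iIndepFun X μ)
    (hident : ∀ i, IdentDistrib (X i) (X 0) μ μ) (a : ℕ) (c : ℝ) (k : ℕ) :
    partialSumTail μ X a c ^ k ≤ partialSumTail μ X (k * a) (k * c) := by
  induction k with
  | zero => simp [partialSumTail]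
  | succ k ih =>
    rw [pow_succ, add_one_mul, Nat.cast_succ, add_one_mul]
    exact (mul_le_mul_left ih _).trans (partialSumTail_mul_le_add hindep hident _ _ _ _)

lemma partialSumTail_antitone (n : ℕ) : Antitone (partialSumTail μ X n) :=
  fun _ _ h ↦ measure_mono fun _ ↦ h.trans

lemma partialSumTail_one (t : ℝ) : partialSumTail μ X 1 t = μ {ω | X 0 ω ≥ t} := by
  simp [partialSumTail]

lemma measure_empMean_ge {n : ℕ} (hn : 1 ≤ n) (t : ℝ) :
    μ {ω | empMean X n ω ≥ t} = partialSumTail μ X n (n * t) := by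
  have : (0 : ℝ) < n := by exact_mod_cast hn
  simp only [partialSumTail, empMean, ge_iff_le, le_div_iff₀ this, mul_comm (n : ℝ)]

end ProbabilityTheory

theorem subadditivity_inequality_general {Ω : Type*} [MeasurableSpace Ω] (μ : Measure Ω) [IsProbabilityMeasure μ]
    (X : ℕ → Ω → ℝ)
    (hindep : iIndepFun X μ)
    (hident : ∀ i, IdentDistrib (X i) (X 0) μ μ)
    (x y α : ℝ) (hxy : x ≤ y) (hα : α ∈ Set.Ioo (0 : ℝ) 1)
    (m n q r : ℕ) (hm : 1 ≤ m) (hmn : m ≤ n) (hdiv : n = m * q + r) :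
    μ {ω | empMean X m ω ≥ x} ^ (Nat.floor (α * q)) *
      μ {ω | empMean X m ω ≥ y} ^ (q - Nat.floor (α * q)) *
        μ {ω | X 0 ω ≥ y} ^ r ≤
      μ {ω | empMean X n ω ≥ α * x + (1 - α) * y} := by
  obtain ⟨hα0, hα1⟩ := hα
  set k := ⌊α * q⌋₊
  have hk : (k : ℝ) ≤ α * q := Nat.floor_le (by positivity)
  have hkq : k ≤ q := Nat.floor_le_of_le (by nlinarith [(q.cast_nonneg : (0 : ℝ) ≤ q)])
  rw [measure_empMean_ge hm, measure_empMean_ge hm, measure_empMean_ge (hm.trans hmn),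
    ← partialSumTail_one]
  subst hdiv
  calc _ ≤ partialSumTail μ X (k * m) (k * (m * x)) *
          partialSumTail μ X ((q - k) * m) ((q - k : ℕ) * (m * y)) *
          partialSumTail μ X (r * 1) (r * y) := by
        gcongr <;> exact partialSumTail_pow_le hindep hident _ _ _
    _ ≤ partialSumTail μ X (k * m + (q - k) * m + r * 1)
          (k * (m * x) + (q - k : ℕ) * (m * y) + r * y) :=
        (mul_le_mul_left (partialSumTail_mul_le_add hindep hident _ _ _ _) _).trans
          (partialSumTail_mul_le_add hindep hident _ _ _ _)
    _ ≤ partialSumTail μ X (m * q + r) ((m * q + r : ℕ) * (α * x + (1 - α) * y)) := by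
        rw [← add_mul, Nat.add_sub_cancel' hkq, mul_one, mul_comm q]
        refine partialSumTail_antitone _ ?_
        have hkm : (k : ℝ) * m ≤ α * (m * q + r) := by
          nlinarith [(m.cast_nonneg : (0 : ℝ) ≤ m), (r.cast_nonneg : (0 : ℝ) ≤ r)]
        push_cast [Nat.cast_sub hkq]
        nlinarith [mul_le_mul_of_nonneg_right hkm (sub_nonneg.2 hxy)]

theorem subadditivity_inequality {Ω : Type*} [MeasurableSpace Ω] (μ : Measure Ω) [IsProbabilityMeasure μ]
    (X : ℕ → Ω → ℝ) (hmeas : ∀ i, Measurable (X i))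
    (hindep : iIndepFun X μ)
    (hident : ∀ i, IdentDistrib (X i) (X 0) μ μ)
    (x y α : ℝ) (hxy : x ≤ y) (hα : α ∈ Set.Ioo (0 : ℝ) 1)
    (m n q r : ℕ) (hm : 1 ≤ m) (hmn : m ≤ n) (hdiv : n = m * q + r) (hr : r < m) :
    μ {ω | empMean X m ω ≥ x} ^ (Nat.floor (α * q)) *
      μ {ω | empMean X m ω ≥ y} ^ (q - Nat.floor (α * q)) *
        μ {ω | X 0 ω ≥ y} ^ r ≤
      μ {ω | empMean X n ω ≥ α * x + (1 - α) * y} :=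
  subadditivity_inequality_general μ X hindep hident x y α hxy hα m n q r hm hmn hdiv
end

section
/- Let c = inf{x ∈ ℝ : ℙ(X₁ ≥ x) = 0} be finite. Then for all λ ≥ 0 and ε > 0, log 𝔼(e^{λ(X₁ - c)}) ≤ log( e^{-λε} + ℙ(X₁ ≥ c - ε) ), and consequently inf_{λ ≥ 0} (log 𝔼(e^{λX₁}) - λc) ≤ log ℙ(X₁ ≥ c). -/
open MeasureTheory ProbabilityTheory Filter Topology

/-- `ENNReal.log` as an order isomorphism. -/
noncomputable def logIso : ENNReal ≃o EReal :=
  ENNReal.log_strictMono.orderIsoOfSurjective _ ENNReal.log_surjective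

theorem at_essential_sup {Ω : Type*} [MeasurableSpace Ω] (μ : Measure Ω) [IsProbabilityMeasure μ]
    (X : ℕ → Ω → ℝ) (hmeas : ∀ i, Measurable (X i))
    (hindep : iIndepFun X μ)
    (hident : ∀ i, IdentDistrib (X i) (X 0) μ μ)
    (hne : {x : ℝ | μ {ω | x ≤ X 0 ω} = 0}.Nonempty)
    (hbd : BddBelow {x : ℝ | μ {ω | x ≤ X 0 ω} = 0})
    (c : ℝ) (hc : c = sInf {x : ℝ | μ {ω | x ≤ X 0 ω} = 0}) :
    (∀ l : ℝ, 0 ≤ l → ∀ ε : ℝ, 0 < ε →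
      ENNReal.log (∫⁻ ω, ENNReal.ofReal (Real.exp (l * (X 0 ω - c))) ∂μ) ≤
        ENNReal.log (ENNReal.ofReal (Real.exp (-(l * ε))) + μ {ω | c - ε ≤ X 0 ω})) ∧
    (⨅ l : ℝ, ⨅ _ : 0 ≤ l, pressure μ X l - ((l * c : ℝ) : EReal)) ≤
      ENNReal.log (μ {ω | c ≤ X 0 ω}) := by
  have hsetm : ∀ a : ℝ, MeasurableSet {ω | a ≤ X 0 ω} := fun a =>
    (hmeas 0) measurableSet_Ici
  -- everything above c is null
  have hgt : ∀ x : ℝ, c < x → μ {ω | x ≤ X 0 ω} = 0 := by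
    intro x hx
    rw [hc] at hx
    obtain ⟨s, hs, hsx⟩ := exists_lt_of_csInf_lt hne hx
    exact measure_mono_null (fun ω hω => le_trans hsx.le hω) hs
  -- X ≤ c a.e.
  have hae : ∀ᵐ ω ∂μ, X 0 ω ≤ c := by
    have hsub : {ω | c < X 0 ω} ⊆ ⋃ n : ℕ, {ω | c + 1 / ((n : ℝ) + 1) ≤ X 0 ω} := by
      intro ω hω
      obtain ⟨n, hn⟩ := exists_nat_one_div_lt (K := ℝ) (sub_pos.mpr hω)
      refine Set.mem_iUnion.mpr ⟨n, ?_⟩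
      show c + 1 / ((n : ℝ) + 1) ≤ X 0 ω
      linarith [hn]
    have h0 : μ {ω | c < X 0 ω} = 0 := by
      refine measure_mono_null hsub (measure_iUnion_null fun n => hgt _ ?_)
      have : (0:ℝ) < 1 / (n + 1) := by positivity
      linarith
    rw [ae_iff]
    simpa [not_le] using h0
  -- main integral bound
  have key : ∀ l : ℝ, 0 ≤ l → ∀ ε : ℝ, 0 < ε →
      (∫⁻ ω, ENNReal.ofReal (Real.exp (l * (X 0 ω - c))) ∂μ) ≤
        ENNReal.ofReal (Real.exp (-(l * ε))) + μ {ω | c - ε ≤ X 0 ω} := by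
    intro l hl ε hε
    set s := {ω | c - ε ≤ X 0 ω} with hs
    have hsm : MeasurableSet s := hsetm _
    rw [← lintegral_add_compl _ hsm, add_comm]
    have h1 : (∫⁻ ω in s, ENNReal.ofReal (Real.exp (l * (X 0 ω - c))) ∂μ) ≤ μ s := by
      calc (∫⁻ ω in s, ENNReal.ofReal (Real.exp (l * (X 0 ω - c))) ∂μ)
          ≤ ∫⁻ _ in s, 1 ∂μ := by
            refine lintegral_mono_ae ?_
            filter_upwards [ae_restrict_of_ae hae] with ω hω
            have : l * (X 0 ω - c) ≤ 0 := mul_nonpos_of_nonneg_of_nonpos hl (by linarith)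
            simpa using ENNReal.ofReal_le_one.mpr (Real.exp_le_one_iff.mpr this)
        _ = μ s := by simp
    have h2 : (∫⁻ ω in sᶜ, ENNReal.ofReal (Real.exp (l * (X 0 ω - c))) ∂μ) ≤
        ENNReal.ofReal (Real.exp (-(l * ε))) := by
      calc (∫⁻ ω in sᶜ, ENNReal.ofReal (Real.exp (l * (X 0 ω - c))) ∂μ)
          ≤ ∫⁻ _ in sᶜ, ENNReal.ofReal (Real.exp (-(l * ε))) ∂μ := by
            refine setLIntegral_mono measurable_const fun ω hω => ?_
            have hω' : X 0 ω + ε < c := by simpa [hs, not_le] using hω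
            have : l * (X 0 ω - c) ≤ -(l * ε) := by nlinarith
            exact ENNReal.ofReal_le_ofReal (Real.exp_le_exp.mpr this)
        _ = ENNReal.ofReal (Real.exp (-(l * ε))) * μ sᶜ := by simp
        _ ≤ ENNReal.ofReal (Real.exp (-(l * ε))) * 1 := by
            exact mul_le_mul_right prob_le_one _
        _ = _ := mul_one _
    exact add_le_add h2 h1
  refine ⟨fun l hl ε hε => ENNReal.log_monotone (key l hl ε hε), ?_⟩
  -- rewrite pressure - l*c as log of tilted integral
  have hpress : ∀ l : ℝ, pressure μ X l - ((l * c : ℝ) : EReal) =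
      ENNReal.log (∫⁻ ω, ENNReal.ofReal (Real.exp (l * (X 0 ω - c))) ∂μ) := by
    intro l
    have hint : (∫⁻ ω, ENNReal.ofReal (Real.exp (l * (X 0 ω - c))) ∂μ) =
        (∫⁻ ω, ENNReal.ofReal (Real.exp (l * X 0 ω)) ∂μ) * ENNReal.ofReal (Real.exp (-(l * c))) := by
      rw [← lintegral_mul_const' _ _ (by simp)]
      congr 1
      ext ω
      rw [← ENNReal.ofReal_mul (Real.exp_nonneg _), ← Real.exp_add]
      ring_nf
    rw [hint, ENNReal.log_mul_add, ENNReal.log_ofReal_of_pos (Real.exp_pos _), Real.log_exp,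
      pressure, sub_eq_add_neg, ← EReal.coe_neg]
  -- for each fixed ε > 0, bound the infimum
  have hstep : ∀ ε : ℝ, 0 < ε →
      (⨅ l : ℝ, ⨅ _ : 0 ≤ l, pressure μ X l - ((l * c : ℝ) : EReal)) ≤
        ENNReal.log (μ {ω | c - ε ≤ X 0 ω}) := by
    intro ε hε
    set p := μ {ω | c - ε ≤ X 0 ω} with hp
    have hle : ∀ n : ℕ, (⨅ l : ℝ, ⨅ _ : 0 ≤ l, pressure μ X l - ((l * c : ℝ) : EReal)) ≤
        ENNReal.log (ENNReal.ofReal (Real.exp (-((n : ℝ) * ε))) + p) := by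
      intro n
      refine le_trans (iInf₂_le (n : ℝ) (Nat.cast_nonneg n)) ?_
      rw [hpress]
      exact ENNReal.log_monotone (key _ (Nat.cast_nonneg n) ε hε)
    have h0 : Tendsto (fun n : ℕ => ENNReal.ofReal (Real.exp (-((n : ℝ) * ε)))) atTop (𝓝 0) := by
      have hr : Tendsto (fun n : ℕ => Real.exp (-((n : ℝ) * ε))) atTop (𝓝 0) := by
        apply Real.tendsto_exp_atBot.comp
        exact tendsto_neg_atTop_atBot.comp (tendsto_natCast_atTop_atTop.atTop_mul_const hε)
      simpa [Function.comp_def] using (ENNReal.continuous_ofReal.tendsto 0).comp hr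
    have htend : Tendsto (fun n : ℕ => ENNReal.ofReal (Real.exp (-((n : ℝ) * ε))) + p)
        atTop (𝓝 p) := by
      simpa using h0.add (tendsto_const_nhds (x := p))
    have hlog : Tendsto (fun n : ℕ => ENNReal.log (ENNReal.ofReal (Real.exp (-((n : ℝ) * ε))) + p))
        atTop (𝓝 (ENNReal.log p)) :=
      (logIso.toHomeomorph.continuous.tendsto p).comp htend
    exact ge_of_tendsto hlog (Eventually.of_forall hle)
  -- take ε = 1/(n+1) → 0
  have hmono : Antitone fun n : ℕ => {ω | c - 1 / (n + 1 : ℝ) ≤ X 0 ω} := by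
    intro m n hmn ω hω
    simp only [Set.mem_setOf_eq] at *
    have : (1 : ℝ) / (n + 1) ≤ 1 / (m + 1) := by
      apply one_div_le_one_div_of_le (by positivity)
      exact_mod_cast by omega
    linarith
  have hiInter : (⋂ n : ℕ, {ω | c - 1 / (n + 1 : ℝ) ≤ X 0 ω}) = {ω | c ≤ X 0 ω} := by
    ext ω
    simp only [Set.mem_iInter, Set.mem_setOf_eq]
    constructor
    · intro h
      refine le_of_forall_pos_le_add fun δ hδ => ?_
      obtain ⟨n, hn⟩ := exists_nat_one_div_lt hδ
      have := h n
      push_cast at this hn ⊢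
      linarith
    · intro h n
      have : (0:ℝ) < 1 / (n + 1) := by positivity
      linarith
  have hmeasInf : μ {ω | c ≤ X 0 ω} = ⨅ n : ℕ, μ {ω | c - 1 / (n + 1 : ℝ) ≤ X 0 ω} := by
    rw [← hiInter]
    exact hmono.directed_ge.measure_iInter (fun n => (hsetm _).nullMeasurableSet)
      ⟨0, measure_ne_top _ _⟩
  calc (⨅ l : ℝ, ⨅ _ : 0 ≤ l, pressure μ X l - ((l * c : ℝ) : EReal))
      ≤ ⨅ n : ℕ, ENNReal.log (μ {ω | c - 1 / (n + 1 : ℝ) ≤ X 0 ω}) :=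
        le_iInf fun n => hstep _ (by positivity)
    _ = ENNReal.log (⨅ n : ℕ, μ {ω | c - 1 / (n + 1 : ℝ) ≤ X 0 ω}) :=
        (logIso.map_iInf _).symm
    _ = ENNReal.log (μ {ω | c ≤ X 0 ω}) := by rw [← hmeasInf]
end
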